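/- Let X be a compact connected metric space and F : X ⇉ X a robust continuous (lsc and usc, compact-valued) multifunction. Then either F has a unique minimal set, or F has infinitely many minimal sets and no minimal set is isolated: for every minimal set A and every open V ⊇ A there is a minimal set B ⊆ V with B ∩ A = ∅. -/
import Mathlib


open Metric Set

/-- Lower semicontinuity of a multifunction: the lower pre-image of every open set is open. -/
def LSC {X Y : Type*} [TopologicalSpace X] [TopologicalSpace Y] (F : X → Set Y) : Prop :=
  ∀ V : Set Y, IsOpen V → IsOpen {x | (F x ∩ V).Nonempty}

/-- Upper semicontinuity of a multifunction: the upper pre-image of every open set is open. -/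
def USC {X Y : Type*} [TopologicalSpace X] [TopologicalSpace Y] (F : X → Set Y) : Prop :=
  ∀ V : Set Y, IsOpen V → IsOpen {x | F x ⊆ V}

/-- Image of a set under a multifunction. -/
def img {X Y : Type*} (F : X → Set Y) (S : Set X) : Set Y := ⋃ s ∈ S, F s

/-- n-fold composition of a multifunction, applied to a point. -/
def iter {X : Type*} (F : X → Set X) : ℕ → X → Set X
  | 0, x => {x}
  | n + 1, x => img F (iter F n x)

/-- The reachable set from a point. -/
def reach {X : Type*} (F : X → Set X) (x : X) : Set X := ⋃ n, iter F n x

/-- The δ-perturbed multifunction F_δ(x) = B_δ(F(x)). -/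
noncomputable def pert {X : Type*} [PseudoEMetricSpace X] (F : X → Set X) (δ : ℝ) (x : X) :
    Set X := Metric.thickening δ (F x)

/-- The chain reachable set from a point. -/
noncomputable def chainReach {X : Type*} [PseudoEMetricSpace X] (F : X → Set X) (x : X) :
    Set X := ⋂ ε > (0 : ℝ), reach (pert F ε) x

/-- A set is sub-invariant if F(A) ⊆ A. -/
def SubInv {X : Type*} (F : X → Set X) (A : Set X) : Prop := img F A ⊆ A

/-- A minimal set: nonempty, closed, sub-invariant, and minimal among such sets. -/
def MinimalSet {X : Type*} [TopologicalSpace X] (F : X → Set X) (A : Set X) : Prop :=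
  A.Nonempty ∧ IsClosed A ∧ SubInv F A ∧
    ∀ B ⊆ A, B.Nonempty → IsClosed B → SubInv F B → B = A

/-- Lyapunov stability of a set. -/
def LyapStable {X : Type*} [TopologicalSpace X] (F : X → Set X) (A : Set X) : Prop :=
  ∀ V : Set X, IsOpen V → A ⊆ V → ∃ W : Set X, IsOpen W ∧ A ⊆ W ∧ img (reach F) W ⊆ V

set_option linter.unusedSectionVars false
set_option linter.unusedVariables false
section Aux

variable {X : Type*} [MetricSpace X]

lemma mem_img {F : X → Set X} {S : Set X} {y : X} :
    y ∈ img F S ↔ ∃ s ∈ S, y ∈ F s := by simp [img]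

lemma img_mono' {F G : X → Set X} {S T : Set X} (h : ∀ z, F z ⊆ G z) (hST : S ⊆ T) :
    img F S ⊆ img G T := by
  intro y hy
  rcases mem_img.1 hy with ⟨s, hs, hys⟩
  exact mem_img.2 ⟨s, hST hs, h s hys⟩

lemma iter_zero (F : X → Set X) (x : X) : iter F 0 x = {x} := rfl

lemma iter_succ (F : X → Set X) (n : ℕ) (x : X) :
    iter F (n+1) x = img F (iter F n x) := rfl

lemma iter_mono {F G : X → Set X} (h : ∀ z, F z ⊆ G z) (n : ℕ) (x : X) :
    iter F n x ⊆ iter G n x := by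
  induction n with
  | zero => exact subset_rfl
  | succ n ih => rw [iter_succ, iter_succ]; exact img_mono' h ih

lemma iter_shift {F G : X → Set X} (h : ∀ z, F z ⊆ G z) {x y : X}
    (hxy : F x ⊆ G y) (n : ℕ) : iter F (n+1) x ⊆ iter G (n+1) y := by
  induction n with
  | zero =>
    rw [iter_succ, iter_succ]
    intro w hw
    rcases mem_img.1 hw with ⟨s, hs, hws⟩
    rw [iter_zero, mem_singleton_iff] at hs
    subst hs
    exact mem_img.2 ⟨y, by rw [iter_zero]; exact mem_singleton y, hxy hws⟩
  | succ n ih => rw [iter_succ, iter_succ]; exact img_mono' h ih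

lemma iter_add {F : X → Set X} {x p : X} {n : ℕ} (hp : p ∈ iter F n x) (m : ℕ) :
    iter F m p ⊆ iter F (n + m) x := by
  induction m with
  | zero =>
    intro w hw
    rw [iter_zero, mem_singleton_iff] at hw
    subst hw; exact hp
  | succ m ih =>
    rw [show n + (m+1) = (n+m)+1 from rfl, iter_succ, iter_succ]
    exact img_mono' (fun z => subset_rfl) ih

/-- The tail of the reachable set: steps ≥ 1. -/
def tailR (F : X → Set X) (x : X) : Set X := ⋃ n, iter F (n+1) x

lemma reach_eq (F : X → Set X) (x : X) : reach F x = {x} ∪ tailR F x := by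
  ext y
  simp only [reach, tailR, mem_iUnion, mem_union, mem_singleton_iff]
  constructor
  · rintro ⟨n, hn⟩
    cases n with
    | zero => left; rw [iter_zero, mem_singleton_iff] at hn; exact hn
    | succ n => right; exact ⟨n, hn⟩
  · rintro (rfl | ⟨n, hn⟩)
    · exact ⟨0, by rw [iter_zero]; exact mem_singleton y⟩
    · exact ⟨n+1, hn⟩

lemma tailR_subset_reach (F : X → Set X) (x : X) : tailR F x ⊆ reach F x := by
  rw [reach_eq]; exact subset_union_right

lemma subinv_tailR (F : X → Set X) (x : X) : SubInv F (tailR F x) := by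
  intro y hy
  rcases mem_img.1 hy with ⟨s, hs, hys⟩
  rcases mem_iUnion.1 hs with ⟨n, hn⟩
  exact mem_iUnion.2 ⟨n+1, mem_img.2 ⟨s, hn, hys⟩⟩

lemma subinv_reach (F : X → Set X) (x : X) : SubInv F (reach F x) := by
  intro y hy
  rcases mem_img.1 hy with ⟨s, hs, hys⟩
  rcases mem_iUnion.1 hs with ⟨n, hn⟩
  exact mem_iUnion.2 ⟨n+1, mem_img.2 ⟨s, hn, hys⟩⟩

lemma lsc_closure {F : X → Set X} (hlsc : LSC F) (S : Set X) :
    img F (closure S) ⊆ closure (img F S) := by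
  intro y hy
  rcases mem_img.1 hy with ⟨x, hx, hyx⟩
  rw [_root_.mem_closure_iff]
  intro V hV hyV
  have hO : IsOpen {z | (F z ∩ V).Nonempty} := hlsc V hV
  have hxO : x ∈ {z | (F z ∩ V).Nonempty} := ⟨y, hyx, hyV⟩
  rcases _root_.mem_closure_iff.1 hx _ hO hxO with ⟨s, hsO, hsS⟩
  rcases hsO with ⟨w, hwF, hwV⟩
  exact ⟨w, hwV, mem_img.2 ⟨s, hsS, hwF⟩⟩

lemma subinv_closure {F : X → Set X} (hlsc : LSC F) {S : Set X} (h : SubInv F S) :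
    SubInv F (closure S) :=
  fun y hy => closure_mono h (lsc_closure hlsc S hy)

lemma reach_subset_of_subinv {F : X → Set X} {S : Set X} (h : SubInv F S) {x : X}
    (hx : x ∈ S) : reach F x ⊆ S := by
  refine iUnion_subset fun n => ?_
  induction n with
  | zero => rw [iter_zero]; exact singleton_subset_iff.2 hx
  | succ n ih =>
    rw [iter_succ]
    exact (img_mono' (fun z => subset_rfl) ih).trans h

lemma pert_self_subset {F : X → Set X} {ε : ℝ} (hε : 0 < ε) (z : X) : F z ⊆ pert F ε z :=
  self_subset_thickening hε (F z)

lemma pert_mono {F : X → Set X} {ε ε' : ℝ} (h : ε ≤ ε') (z : X) : pert F ε z ⊆ pert F ε' z :=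
  thickening_mono h (F z)

lemma absorb {F : X → Set X} {ε ε' : ℝ} (h1 : 0 < ε) (h2 : ε < ε') (x : X) :
    closure (tailR (pert F ε) x) ⊆ tailR (pert F ε') x := by
  intro y hy
  rcases _root_.mem_closure_iff.1 hy (ball y (ε' - ε)) isOpen_ball (mem_ball_self (by linarith)) with
    ⟨p, hpb, hp⟩
  rcases mem_iUnion.1 hp with ⟨n, hpn⟩
  rw [iter_succ] at hpn
  rcases mem_img.1 hpn with ⟨q, hq, hpq⟩
  refine mem_iUnion.2 ⟨n, ?_⟩
  rw [iter_succ]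
  refine mem_img.2 ⟨q, iter_mono (pert_mono h2.le) n x hq, ?_⟩
  rcases Metric.mem_thickening_iff.1 hpq with ⟨z, hz, hdz⟩
  refine Metric.mem_thickening_iff.2 ⟨z, hz, ?_⟩
  have h3 := dist_triangle y p z
  have h4 : dist p y < ε' - ε := mem_ball.1 hpb
  rw [dist_comm] at h4
  linarith

end Aux

section Aux2

variable {X : Type*} [MetricSpace X] [CompactSpace X] {F : X → Set X}

lemma subinv_inter {A B : Set X} (hA : SubInv F A) (hB : SubInv F B) :
    SubInv F (A ∩ B) := by
  intro y hy
  rcases mem_img.1 hy with ⟨s, hs, hys⟩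
  exact ⟨hA (mem_img.2 ⟨s, hs.1, hys⟩), hB (mem_img.2 ⟨s, hs.2, hys⟩)⟩

lemma exists_minimal_subset {K : Set X} (hKne : K.Nonempty) (hKcl : IsClosed K)
    (hKsub : SubInv F K) : ∃ A, A ⊆ K ∧ MinimalSet F A := by
  set S : Set (Set X) := {B | B.Nonempty ∧ IsClosed B ∧ SubInv F B ∧ B ⊆ K} with hS
  have H : ∀ c ⊆ S, IsChain (· ⊆ ·) c → c.Nonempty → ∃ lb ∈ S, ∀ s ∈ c, lb ⊆ s := by
    intro c hcS hchain hcne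
    refine ⟨⋂₀ c, ⟨?_, ?_, ?_, ?_⟩, fun s hs => sInter_subset_of_mem hs⟩
    · -- nonempty
      have : Nonempty c := hcne.to_subtype
      have := IsCompact.nonempty_iInter_of_directed_nonempty_isCompact_isClosed
        (fun s : c => (s : Set X))
        (by
          intro s t
          rcases hchain.total s.2 t.2 with h | h
          · exact ⟨s, subset_rfl, h⟩
          · exact ⟨t, h, subset_rfl⟩)
        (fun s => (hcS s.2).1)
        (fun s => (hcS s.2).2.1.isCompact)
        (fun s => (hcS s.2).2.1)
      rwa [sInter_eq_iInter]
    · exact isClosed_sInter fun s hs => (hcS hs).2.1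
    · intro y hy
      rcases mem_img.1 hy with ⟨s, hs, hys⟩
      refine mem_sInter.2 fun t ht => ?_
      exact (hcS ht).2.2.1 (mem_img.2 ⟨s, mem_sInter.1 hs t ht, hys⟩)
    · rcases hcne with ⟨s, hs⟩
      exact (sInter_subset_of_mem hs).trans (hcS hs).2.2.2
  obtain ⟨m, hmK, hmin⟩ := zorn_superset_nonempty S H K ⟨hKne, hKcl, hKsub, subset_rfl⟩
  obtain ⟨hmne, hmcl, hmsub, hmK'⟩ := hmin.prop
  refine ⟨m, hmK', hmne, hmcl, hmsub, fun B hBm hBne hBcl hBsub => ?_⟩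
  exact (hmin.eq_of_superset ⟨hBne, hBcl, hBsub, hBm.trans hmK'⟩ hBm).symm

lemma minimal_eq_of_inter {A B : Set X} (hA : MinimalSet F A) (hB : MinimalSet F B)
    (h : (A ∩ B).Nonempty) : A = B := by
  have h1 : A ∩ B = A := hA.2.2.2 _ inter_subset_left h
    (hA.2.1.inter hB.2.1) (subinv_inter hA.2.2.1 hB.2.2.1)
  have h2 : A ∩ B = B := hB.2.2.2 _ inter_subset_right h
    (hA.2.1.inter hB.2.1) (subinv_inter hA.2.2.1 hB.2.2.1)
  rw [← h1, h2]

lemma closure_reach_of_mem (hlsc : LSC F) {A : Set X} (hA : MinimalSet F A) {a : X}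
    (ha : a ∈ A) : closure (reach F a) = A := by
  have h1 : reach F a ⊆ A := reach_subset_of_subinv hA.2.2.1 ha
  have h2 : closure (reach F a) ⊆ A := hA.2.1.closure_subset_iff.2 h1
  refine hA.2.2.2 _ h2 ⟨a, subset_closure (mem_iUnion.2 ⟨0, by
    rw [iter_zero]; exact mem_singleton a⟩)⟩ isClosed_closure
    (subinv_closure hlsc (subinv_reach F a))

/-- key lemma: a minimal set inside the orbit closure is inside the tail closure. -/
lemma minimal_subset_closure_tailR (hne : ∀ x, (F x).Nonempty) (hlsc : LSC F)
    {A : Set X} (hA : MinimalSet F A) {y : X} (h : A ⊆ closure (reach F y)) :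
    A ⊆ closure (tailR F y) := by
  have hC : SubInv F (closure (tailR F y)) := subinv_closure hlsc (subinv_tailR F y)
  have hsplit : closure (reach F y) = {y} ∪ closure (tailR F y) := by
    rw [reach_eq, closure_union, closure_singleton]
  by_cases hy : y ∈ A
  · have hFy1 : F y ⊆ tailR F y := fun w hw => mem_iUnion.2 ⟨0, by
      rw [iter_succ]
      exact mem_img.2 ⟨y, by rw [iter_zero]; exact mem_singleton y, hw⟩⟩
    have hFy2 : F y ⊆ A := fun w hw => hA.2.2.1 (mem_img.2 ⟨y, hy, hw⟩)
    obtain ⟨w, hw⟩ := hne y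
    have hint : (A ∩ closure (tailR F y)).Nonempty :=
      ⟨w, hFy2 hw, subset_closure (hFy1 hw)⟩
    have := hA.2.2.2 _ inter_subset_left hint (hA.2.1.inter isClosed_closure)
      (subinv_inter hA.2.2.1 hC)
    intro a ha
    rw [← this] at ha
    exact ha.2
  · intro a ha
    have := h ha
    rw [hsplit] at this
    rcases this with h1 | h1
    · rw [mem_singleton_iff] at h1; subst h1; exact absurd ha hy
    · exact h1

lemma lsc_iter (hlsc : LSC F) (n : ℕ) {W : Set X} (hW : IsOpen W) :
    IsOpen {x | (iter F n x ∩ W).Nonempty} := by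
  induction n generalizing W with
  | zero =>
    have : {x | (iter F 0 x ∩ W).Nonempty} = W := by
      ext x
      simp [iter_zero, singleton_inter_nonempty]
    rw [this]; exact hW
  | succ n ih =>
    have : {x | (iter F (n+1) x ∩ W).Nonempty}
        = {x | (iter F n x ∩ {z | (F z ∩ W).Nonempty}).Nonempty} := by
      ext x
      simp only [iter_succ, mem_setOf_eq]
      constructor
      · rintro ⟨p, hp, hpW⟩
        rcases mem_img.1 hp with ⟨q, hq, hpq⟩
        exact ⟨q, hq, ⟨p, hpq, hpW⟩⟩
      · rintro ⟨q, hq, p, hpq, hpW⟩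
        exact ⟨p, mem_img.2 ⟨q, hq, hpq⟩, hpW⟩
    rw [this]
    exact ih (hlsc W hW)

end Aux2

section Aux3

variable {X : Type*} [MetricSpace X] [CompactSpace X] {F : X → Set X}

lemma stable_nbhd (hlsc : LSC F) (husc : USC F)
    (hrobust : ∀ x, chainReach F x = closure (reach F x))
    {A : Set X} (hA : MinimalSet F A) {U : Set X} (hU : IsOpen U) (hAU : A ⊆ U) :
    ∃ W : Set X, IsOpen W ∧ A ⊆ W ∧ ∀ y ∈ W, tailR F y ⊆ U := by
  have key : ∀ a ∈ A, ∃ ε : ℝ, 0 < ε ∧ tailR (pert F ε) a ⊆ U := by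
    intro a ha
    have hch : chainReach F a ⊆ U := by
      rw [hrobust a, closure_reach_of_mem hlsc hA ha]; exact hAU
    set C : ℕ → Set X := fun k => closure (tailR (pert F (1/(k+1:ℝ))) a) with hC
    have hpos : ∀ k : ℕ, (0:ℝ) < 1/(k+1) := fun k => by positivity
    have hmono : ∀ k l : ℕ, k ≤ l → C l ⊆ C k := by
      intro k l hkl
      refine closure_mono fun w hw => ?_
      rcases mem_iUnion.1 hw with ⟨n, hn⟩
      refine mem_iUnion.2 ⟨n, iter_mono (pert_mono ?_) (n+1) a hn⟩
      have : (k:ℝ)+1 ≤ (l:ℝ)+1 := by exact_mod_cast Nat.succ_le_succ hkl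
      exact one_div_le_one_div_of_le (by positivity) this
    have hinter : (⋂ k, C k) ⊆ U := by
      intro z hz
      refine hch ?_
      simp only [chainReach, mem_iInter]
      intro ε hε
      obtain ⟨k, hk⟩ := exists_nat_one_div_lt (half_pos hε)
      have hzk : z ∈ C k := mem_iInter.1 hz k
      have h1 : z ∈ tailR (pert F (2*(1/(k+1:ℝ)))) a := by
        refine absorb (hpos k) ?_ a hzk
        have := hpos k; linarith
      have h2 : tailR (pert F (2*(1/(k+1:ℝ)))) a ⊆ tailR (pert F ε) a := by
        intro w hw
        rcases mem_iUnion.1 hw with ⟨n, hn⟩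
        refine mem_iUnion.2 ⟨n, iter_mono (pert_mono (by push_cast at hk ⊢; linarith)) (n+1) a hn⟩
      exact tailR_subset_reach _ _ (h2 h1)
    have hex : ∃ k, C k ∩ Uᶜ = ∅ := by
      by_contra hcon
      push_neg at hcon
      have hne' : ∀ k, (C k ∩ Uᶜ).Nonempty := hcon
      have := IsCompact.nonempty_iInter_of_directed_nonempty_isCompact_isClosed
        (fun k => C k ∩ Uᶜ)
        (by
          intro k l
          refine ⟨max k l, ?_, ?_⟩
          · exact inter_subset_inter_left _ (hmono k _ (le_max_left k l))
          · exact inter_subset_inter_left _ (hmono l _ (le_max_right k l)))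
        hne'
        (fun k => (isClosed_closure.inter hU.isClosed_compl).isCompact)
        (fun k => isClosed_closure.inter hU.isClosed_compl)
      obtain ⟨z, hz⟩ := this
      have hz1 : z ∈ ⋂ k, C k := mem_iInter.2 fun k => (mem_iInter.1 hz k).1
      exact (mem_iInter.1 hz 0).2 (hinter hz1)
    obtain ⟨k, hk⟩ := hex
    refine ⟨1/(k+1:ℝ), hpos k, ?_⟩
    intro w hw
    have hwC : w ∈ C k := subset_closure hw
    by_contra hwU
    exact (eq_empty_iff_forall_notMem.1 hk) w ⟨hwC, hwU⟩
  choose! ε hε hεU using key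
  refine ⟨⋃ a ∈ A, {y | F y ⊆ thickening (ε a) (F a)}, ?_, ?_, ?_⟩
  · exact isOpen_biUnion fun a _ => husc _ isOpen_thickening
  · intro a ha
    exact mem_biUnion ha (self_subset_thickening (hε a ha) (F a))
  · intro y hy
    rcases mem_iUnion₂.1 hy with ⟨a, ha, hya⟩
    have hya' : F y ⊆ pert F (ε a) a := hya
    intro w hw
    rcases mem_iUnion.1 hw with ⟨n, hn⟩
    exact hεU a ha (mem_iUnion.2 ⟨n, iter_shift (pert_self_subset (hε a ha)) hya' n hn⟩)

/-- The weak basin of a minimal set. -/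
def basinW (F : X → Set X) (A : Set X) : Set X := {x | A ⊆ closure (reach F x)}

lemma mem_basinW_of_mem (hlsc : LSC F) {A : Set X} (hA : MinimalSet F A) {a : X} (ha : a ∈ A) :
    a ∈ basinW F A := by
  show A ⊆ closure (reach F a)
  rw [closure_reach_of_mem hlsc hA ha]

lemma basinW_isClosed (hne : ∀ x, (F x).Nonempty) (hlsc : LSC F) (husc : USC F)
    (hrobust : ∀ x, chainReach F x = closure (reach F x))
    {A : Set X} (hA : MinimalSet F A) : IsClosed (basinW F A) := by
  refine isClosed_of_closure_subset fun x hx => ?_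
  show A ⊆ closure (reach F x)
  rw [← hrobust x]
  intro a ha
  simp only [chainReach, mem_iInter]
  intro δ hδ
  have hN : IsOpen {x' | F x' ⊆ thickening (δ/2) (F x)} := husc _ isOpen_thickening
  have hxN : x ∈ {x' | F x' ⊆ thickening (δ/2) (F x)} :=
    self_subset_thickening (half_pos hδ) (F x)
  rcases _root_.mem_closure_iff.1 hx _ hN hxN with ⟨x', hx'N, hx'B⟩
  have hx'B' : A ⊆ closure (reach F x') := hx'B
  have h1 : A ⊆ closure (tailR F x') := minimal_subset_closure_tailR hne hlsc hA hx'B'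
  have h2 : tailR F x' ⊆ tailR (pert F (δ/2)) x := by
    intro w hw
    rcases mem_iUnion.1 hw with ⟨n, hn⟩
    exact mem_iUnion.2 ⟨n, iter_shift (pert_self_subset (half_pos hδ)) hx'N n hn⟩
  have h3 : A ⊆ tailR (pert F δ) x :=
    (h1.trans (closure_mono h2)).trans (absorb (half_pos hδ) (by linarith) x)
  exact tailR_subset_reach _ _ (h3 ha)

lemma basinW_isOpen (hne : ∀ x, (F x).Nonempty) (hlsc : LSC F) (husc : USC F)
    (hrobust : ∀ x, chainReach F x = closure (reach F x))
    {A V₀ : Set X} (hA : MinimalSet F A) (hV₀ : IsOpen V₀) (hAV : A ⊆ V₀)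
    (hiso : ∀ B, MinimalSet F B → B ⊆ V₀ → B = A) :
    IsOpen (basinW F A) := by
  obtain ⟨U, hUo, hAU, hUV⟩ := normal_exists_closure_subset hA.2.1 hV₀ hAV
  obtain ⟨W, hWo, hAW, hWU⟩ := stable_nbhd hlsc husc hrobust hA hUo hAU
  rw [isOpen_iff_forall_mem_open]
  intro x hx
  obtain ⟨a, ha⟩ := hA.1
  have hax : a ∈ closure (reach F x) := hx ha
  rcases _root_.mem_closure_iff.1 hax W hWo (hAW ha) with ⟨p, hpW, hpR⟩
  rcases mem_iUnion.1 hpR with ⟨n, hpn⟩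
  refine ⟨{x' | (iter F n x' ∩ W).Nonempty}, ?_, lsc_iter hlsc n hWo, ⟨p, hpn, hpW⟩⟩
  rintro x' ⟨p', hp'n, hp'W⟩
  have hD1 : tailR F p' ⊆ U := hWU p' hp'W
  have hDcl : closure (tailR F p') ⊆ V₀ := (closure_mono hD1).trans hUV
  have hDsub : SubInv F (closure (tailR F p')) := subinv_closure hlsc (subinv_tailR F p')
  have hDne : (closure (tailR F p')).Nonempty := by
    obtain ⟨w, hw⟩ := hne p'
    refine ⟨w, subset_closure (mem_iUnion.2 ⟨0, ?_⟩)⟩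
    rw [iter_succ]
    exact mem_img.2 ⟨p', by rw [iter_zero]; exact mem_singleton p', hw⟩
  obtain ⟨M, hMD, hM⟩ := exists_minimal_subset hDne isClosed_closure hDsub
  have hMA : M = A := hiso M hM (hMD.trans hDcl)
  have h1 : A ⊆ closure (tailR F p') := hMA ▸ hMD
  have h2 : tailR F p' ⊆ reach F x' := by
    intro w hw
    rcases mem_iUnion.1 hw with ⟨m, hm⟩
    exact mem_iUnion.2 ⟨n + (m+1), iter_add hp'n (m+1) hm⟩
  show A ⊆ closure (reach F x')
  exact h1.trans ((closure_mono h2).trans (closure_mono subset_rfl))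

end Aux3

theorem stmt19 {X : Type*} [MetricSpace X] [CompactSpace X] [ConnectedSpace X]
    (F : X → Set X) (hne : ∀ x, (F x).Nonempty) (hcomp : ∀ x, IsCompact (F x))
    (hlsc : LSC F) (husc : USC F)
    (hrobust : ∀ x, chainReach F x = closure (reach F x)) :
    (∃! A : Set X, MinimalSet F A) ∨
      ({A : Set X | MinimalSet F A}.Infinite ∧
        ∀ A : Set X, MinimalSet F A → ∀ V : Set X, IsOpen V → A ⊆ V →
          ∃ B : Set X, MinimalSet F B ∧ B ⊆ V ∧ B ∩ A = ∅) := by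
  classical
  obtain ⟨A₀, -, hA₀⟩ := exists_minimal_subset (F := F) univ_nonempty isClosed_univ
    (fun y _ => mem_univ y)
  by_cases huq : ∀ B, MinimalSet F B → B = A₀
  · exact Or.inl ⟨A₀, hA₀, huq⟩
  push_neg at huq
  obtain ⟨B₀, hB₀, hB₀ne⟩ := huq
  have noniso : ∀ A : Set X, MinimalSet F A → ∀ V : Set X, IsOpen V → A ⊆ V →
      ∃ B : Set X, MinimalSet F B ∧ B ⊆ V ∧ B ∩ A = ∅ := by
    intro A hA V hV hAV
    by_contra hcon
    push_neg at hcon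
    have hiso : ∀ B, MinimalSet F B → B ⊆ V → B = A := by
      intro B hB hBV
      exact minimal_eq_of_inter hB hA (hcon B hB hBV)
    have hop := basinW_isOpen hne hlsc husc hrobust hA hV hAV hiso
    have hcl := basinW_isClosed hne hlsc husc hrobust hA
    obtain ⟨a, ha⟩ := hA.1
    have huniv' : basinW F A = univ :=
      IsClopen.eq_univ ⟨hcl, hop⟩ ⟨a, mem_basinW_of_mem hlsc hA ha⟩
    have hall : ∀ B, MinimalSet F B → B = A := by
      intro B hB
      obtain ⟨b, hb⟩ := hB.1
      have hbB : A ⊆ closure (reach F b) := by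
        have hmem : b ∈ basinW F A := huniv' ▸ mem_univ b
        exact hmem
      have hAB : A ⊆ B :=
        hbB.trans (hB.2.1.closure_subset_iff.2 (reach_subset_of_subinv hB.2.2.1 hb))
      exact (hB.2.2.2 A hAB hA.1 hA.2.1 hA.2.2.1).symm
    exact hB₀ne ((hall B₀ hB₀).trans (hall A₀ hA₀).symm)
  refine Or.inr ⟨?_, noniso⟩
  by_contra hinf
  rw [Set.not_infinite] at hinf
  set M := {A : Set X | MinimalSet F A} with hM
  have hfinU : (M \ {A₀}).Finite := hinf.subset diff_subset
  have hVcl : IsClosed (⋃₀ (M \ {A₀})) := by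
    rw [sUnion_eq_biUnion]
    exact hfinU.isClosed_biUnion fun C hC => hC.1.2.1
  have hA₀V : A₀ ⊆ (⋃₀ (M \ {A₀}))ᶜ := by
    intro a ha hmem
    rcases mem_sUnion.1 hmem with ⟨C, hC, haC⟩
    have : A₀ = C := minimal_eq_of_inter hA₀ hC.1 ⟨a, ha, haC⟩
    exact hC.2 this.symm
  obtain ⟨B', hB', hB'V, hB'A⟩ := noniso A₀ hA₀ _ hVcl.isOpen_compl hA₀V
  have hB'ne : B' ≠ A₀ := by
    intro h
    subst h
    rw [inter_self] at hB'A
    exact hB'.1.ne_empty hB'A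
  obtain ⟨b, hb⟩ := hB'.1
  exact hB'V hb (mem_sUnion.2 ⟨B', ⟨hB', hB'ne⟩, hb⟩)
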